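/- Let r ≥ 3 and let T be a tree with k edges having a vertex x_0 adjacent to ℓ leaves of T, where ℓ > 3k/4 + (r-3)/2. Then every graph G containing no K_{2,r} as a subgraph satisfies ex*(G, T) ≤ (k-1)·|V(G)|/2, i.e. 2·ex*(G,T) ≤ (k-1)·|V(G)|. -/

import Mathlib

open SimpleGraph

/-- An edge coloring is proper on `H` if distinct edges of `H` sharing a vertex
receive different colors. -/
def IsProperEdgeColoring {V : Type*} (H : SimpleGraph V) (c : Sym2 V → ℕ) : Prop :=
  ∀ ⦃e₁ : Sym2 V⦄, e₁ ∈ H.edgeSet → ∀ ⦃e₂ : Sym2 V⦄, e₂ ∈ H.edgeSet →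
    e₁ ≠ e₂ → (∃ v, v ∈ e₁ ∧ v ∈ e₂) → c e₁ ≠ c e₂

/-- The graph `H`, edge colored by `c`, contains a rainbow copy of `F`:
there is an (injective) copy of `F` in `H` all of whose edges receive
pairwise distinct colors. -/
def HasRainbowCopy {V W : Type*} (H : SimpleGraph V) (c : Sym2 V → ℕ)
    (F : SimpleGraph W) : Prop :=
  ∃ f : W ↪ V, (∀ ⦃a b : W⦄, F.Adj a b → H.Adj (f a) (f b)) ∧
    ∀ ⦃a b a' b' : W⦄, F.Adj a b → F.Adj a' b' → s(a, b) ≠ s(a', b') →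
      c s(f a, f b) ≠ c s(f a', f b')

/-- `H` admits a proper edge coloring with no rainbow copy of `F`. -/
def RainbowFree {V W : Type*} (H : SimpleGraph V) (F : SimpleGraph W) : Prop :=
  ∃ c : Sym2 V → ℕ, IsProperEdgeColoring H c ∧ ¬ HasRainbowCopy H c F

/-- The rainbow extremal number `ex*(G,F)`: the maximum number of edges of a
subgraph `H` of `G` admitting a proper edge coloring with no rainbow copy of `F`. -/
noncomputable def rainbowExtremalNumber {V W : Type*} [Fintype V]
    (G : SimpleGraph V) (F : SimpleGraph W) : ℕ :=
  sSup {m | ∃ H : SimpleGraph V, H ≤ G ∧ RainbowFree H F ∧ m = H.edgeSet.ncard}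

/-- The minimum degree of a subgraph, taken over its own vertex set. -/
noncomputable def subMinDegree {V : Type*} {G : SimpleGraph V} (H : G.Subgraph) : ℕ :=
  sInf {d | ∃ v ∈ H.verts, d = (H.neighborSet v).ncard}

/-- `δ*(G,F)`: the maximum of the minimum degree over all subgraphs `H` of `G`
admitting a proper edge coloring with no rainbow copy of `F`. -/
noncomputable def rainbowMinDegree {V W : Type*} [Fintype V]
    (G : SimpleGraph V) (F : SimpleGraph W) : ℕ :=
  sSup {m | ∃ H : G.Subgraph, RainbowFree H.spanningCoe F ∧ m = subMinDegree H}

/-- The `n`-dimensional hypercube graph `Q_n`. -/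
def cubeGraph (n : ℕ) : SimpleGraph (Fin n → Bool) where
  Adj x y := {i | x i ≠ y i}.ncard = 1
  symm := by
    constructor; intro x y h
    have hs : {i | y i ≠ x i} = {i | x i ≠ y i} := by ext i; simp [ne_comm]
    rw [hs]; exact h
  loopless := by
    constructor; intro x h
    simp at h

/-- The star `K_{1,k}` with `k` edges. -/
def starGraph (k : ℕ) : SimpleGraph (Fin (k + 1)) where
  Adj i j := i ≠ j ∧ (i = 0 ∨ j = 0)
  symm := by constructor; intro i j h; exact ⟨h.1.symm, h.2.symm⟩
  loopless := by constructor; intro i h; exact h.1 rfl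

/-- `G` contains a copy of `F` as a subgraph. -/
def ContainsCopy {V W : Type*} (G : SimpleGraph V) (F : SimpleGraph W) : Prop :=
  ∃ f : W ↪ V, ∀ ⦃a b : W⦄, F.Adj a b → G.Adj (f a) (f b)

/-!
Let `H ≤ G` carry a proper colouring with no rainbow `T` and suppose `2 e(H) > (k - 1) n`.
An inclusion-minimal vertex set `B` with `2 e(B) > (k - 1) |B|` has minimum degree `≥ k/2`, since
deleting a vertex of smaller degree keeps the inequality, and by averaging it contains a vertex `v₀`
of degree `≥ k` in `B`.
Root `T` at `x₀ ↦ v₀` and embed it into `B` greedily, parents first and the `ℓ` leaves at `x₀`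
last, with distinct images and pairwise distinct edge colours. A vertex whose parent `p` is not
the root is also kept out of `N(v₀)`; by `K_{2,r}`-freeness this forbids at most
`2 (k - ℓ - 1) + (r - 1) < k/2` neighbours of `f p`, which is where `4ℓ > 3k + 2(r - 3)` is used.
That side condition makes every image in `N(v₀)` a child of the root whose edge colour is already
used, so a child of the root only loses the fewer than `k` neighbours of `v₀` along used colours.
-/

open Finset

namespace SimpleGraph.IsTree

variable {W : Type*} {T : SimpleGraph W} (hT : T.IsTree) (x0 : W)

noncomputable def pathToRoot (w : W) : T.Walk w x0 := (hT.existsUnique_path w x0).choose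

lemma isPath_pathToRoot (w : W) : (hT.pathToRoot x0 w).IsPath :=
  (hT.existsUnique_path w x0).choose_spec.1

lemma eq_pathToRoot {w : W} {p : T.Walk w x0} (hp : p.IsPath) : p = hT.pathToRoot x0 w :=
  (hT.existsUnique_path w x0).choose_spec.2 p hp

noncomputable def parent (w : W) : W := (hT.pathToRoot x0 w).snd

noncomputable def depth (w : W) : ℕ := (hT.pathToRoot x0 w).length

variable {hT x0}

lemma adj_parent {w : W} (hw : w ≠ x0) : T.Adj w (hT.parent x0 w) :=
  Walk.adj_snd (Walk.not_nil_of_ne hw)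

lemma depth_parent_lt {w : W} (hw : w ≠ x0) : hT.depth x0 (hT.parent x0 w) < hT.depth x0 w := by
  have htail := hT.eq_pathToRoot x0 (hT.isPath_pathToRoot x0 w).tail
  rw [depth, depth, parent, ← htail, ← Walk.length_tail_add_one (Walk.not_nil_of_ne hw)]
  exact Nat.lt_succ_self _

lemma exists_eq_mk_parent_of_adj {a b : W} (hab : T.Adj a b) :
    ∃ w, w ≠ x0 ∧ s(a, b) = s(hT.parent x0 w, w) := by
  by_cases ha : a ∈ (hT.pathToRoot x0 b).support
  · have hb : b ≠ x0 := by
      rintro rfl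
      rw [← hT.eq_pathToRoot b Walk.IsPath.nil] at ha
      exact hab.ne (by simpa using ha)
    refine ⟨b, hb, ?_⟩
    rw [parent, ← hT.isAcyclic.eq_snd_of_adj_start (hT.isPath_pathToRoot x0 b) hab.symm ha,
      Sym2.eq_swap]
  · have ha0 : a ≠ x0 := fun h => ha (h ▸ Walk.end_mem_support _)
    refine ⟨a, ha0, ?_⟩
    rw [parent, ← hT.eq_pathToRoot x0 ((hT.isPath_pathToRoot x0 b).cons ha (h := hab)),
      Walk.snd_cons, Sym2.eq_swap]

end SimpleGraph.IsTree

lemma SimpleGraph.eq_of_adj_of_ncard_neighborSet_eq_one {W : Type*} {T : SimpleGraph W}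
    {y z z' : W} (hy : (T.neighborSet y).ncard = 1) (hz : T.Adj y z) (hz' : T.Adj y z') :
    z = z' := by
  obtain ⟨a, ha⟩ := Set.ncard_eq_one.1 hy
  have hz : z ∈ T.neighborSet y := hz
  have hz' : z' ∈ T.neighborSet y := hz'
  rw [ha, Set.mem_singleton_iff] at hz hz'
  exact hz.trans hz'.symm

lemma SimpleGraph.IsContained.containsCopy {V W : Type*} {F : SimpleGraph W} {G : SimpleGraph V}
    (h : F ⊑ G) : ContainsCopy G F :=
  let ⟨f⟩ := h
  ⟨⟨f, f.injective⟩, fun _ _ hab => f.toHom.map_adj hab⟩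

lemma ContainsCopy.mono {V W : Type*} {F : SimpleGraph W} {G G' : SimpleGraph V} (hle : G ≤ G')
    (h : ContainsCopy G F) : ContainsCopy G' F :=
  let ⟨f, hf⟩ := h
  ⟨f, fun _ _ hab => hle (hf hab)⟩

namespace SimpleGraph

variable {V : Type*} [Fintype V] [DecidableEq V] (H : SimpleGraph V) [DecidableRel H.Adj]

def degreeIn (s : Finset V) (v : V) : ℕ := #(H.neighborFinset v ∩ s)

variable {H}

lemma degreeIn_erase {s : Finset V} {v : V} (hv : v ∈ s) (u : V) :
    H.degreeIn s u = H.degreeIn (s.erase v) u + if H.Adj u v then 1 else 0 := by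
  rw [degreeIn, degreeIn, inter_erase]
  split_ifs with huv
  · rw [card_erase_add_one (mem_inter.2 ⟨(mem_neighborFinset _ _ _).2 huv, hv⟩)]
  · rw [erase_eq_of_notMem (fun h => huv ((mem_neighborFinset _ _ _).1 (mem_inter.1 h).1)),
      add_zero]

lemma sum_degreeIn_erase {s : Finset V} {v : V} (hv : v ∈ s) :
    ∑ u ∈ s, H.degreeIn s u =
      ∑ u ∈ s.erase v, H.degreeIn (s.erase v) u + 2 * H.degreeIn s v := by
  have hback : ∑ u ∈ s.erase v, (if H.Adj u v then 1 else 0) = H.degreeIn s v := by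
    rw [sum_boole, Nat.cast_id, degreeIn]
    congr 1
    ext u
    simp only [mem_filter, mem_erase, mem_inter, mem_neighborFinset]
    exact ⟨fun ⟨⟨_, hu⟩, huv⟩ => ⟨huv.symm, hu⟩, fun ⟨hvu, hu⟩ => ⟨⟨hvu.ne', hu⟩, hvu.symm⟩⟩
  rw [← add_sum_erase s _ hv, sum_congr rfl fun u _ => degreeIn_erase hv u, sum_add_distrib,
    hback]
  ring

lemma exists_minDegree_core {k : ℕ} {s : Finset V}
    (h : (k - 1) * #s < ∑ v ∈ s, H.degreeIn s v) :
    ∃ B : Finset V, (∀ v ∈ B, k ≤ 2 * H.degreeIn B v) ∧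
      (k - 1) * #B < ∑ v ∈ B, H.degreeIn B v := by
  obtain ⟨B, hB, hmin⟩ := exists_minimal_of_wellFoundedLT
    (fun B : Finset V => (k - 1) * #B < ∑ v ∈ B, H.degreeIn B v) ⟨s, h⟩
  refine ⟨B, fun v hv => ?_, hB⟩
  by_contra! hlow
  have hsmaller : (k - 1) * #(B.erase v) < ∑ u ∈ B.erase v, H.degreeIn (B.erase v) u := by
    have hB' : (k - 1) * #B < _ := hB
    rw [sum_degreeIn_erase hv, ← card_erase_add_one hv, Nat.mul_add_one] at hB'
    have hlow' : 2 * H.degreeIn B v ≤ k - 1 := by omega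
    omega
  exact (erase_ssubset hv).not_ge (hmin hsmaller (erase_subset v B))

lemma exists_le_degreeIn {k : ℕ} {B : Finset V} (h : (k - 1) * #B < ∑ v ∈ B, H.degreeIn B v) :
    ∃ v ∈ B, k ≤ H.degreeIn B v := by
  obtain ⟨v, hv, hlt⟩ := exists_lt_of_sum_lt (f := fun _ => k - 1) (g := H.degreeIn B)
    (by rwa [sum_const, smul_eq_mul, mul_comm])
  exact ⟨v, hv, by omega⟩

lemma sum_degreeIn_univ : ∑ v, H.degreeIn univ v = 2 * #H.edgeFinset := by
  simp only [degreeIn, inter_univ, card_neighborFinset_eq_degree, sum_degrees_eq_twice_card_edges]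

lemma card_inter_neighborFinset_lt {r : ℕ}
    (hH : ¬ContainsCopy H (completeBipartiteGraph (Fin 2) (Fin r))) {x y : V} (hxy : x ≠ y) :
    #(H.neighborFinset x ∩ H.neighborFinset y) < r := by
  by_contra! hr
  obtain ⟨t, hts, htr⟩ := exists_subset_card_eq hr
  refine hH ((completeBipartiteGraph_isContained_iff.2
    ⟨{x, y}, t, by simp [card_pair hxy], by simp [htr], ?_⟩).containsCopy)
  intro a ha b hb
  have hb' := hts hb
  simp only [coe_insert, coe_singleton, Set.mem_insert_iff, Set.mem_singleton_iff] at ha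
  simp only [mem_inter, mem_neighborFinset] at hb'
  rcases ha with rfl | rfl
  exacts [hb'.1, hb'.2]

end SimpleGraph

lemma IsProperEdgeColoring.injOn_neighborSet {V : Type*} {H : SimpleGraph V} {c : Sym2 V → ℕ}
    (hc : IsProperEdgeColoring H c) (v : V) : Set.InjOn (fun u => c s(v, u)) (H.neighborSet v) := by
  intro u hu u' hu' huu'
  by_contra hne
  refine hc hu hu' ?_ ⟨v, Sym2.mem_mk_left _ _, Sym2.mem_mk_left _ _⟩ huu'
  rw [Ne, Sym2.congr_right]
  exact hne

lemma IsProperEdgeColoring.card_filter_neighborFinset_le {V : Type*} [Fintype V]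
    {H : SimpleGraph V} [DecidableRel H.Adj] {c : Sym2 V → ℕ} (hc : IsProperEdgeColoring H c)
    (v : V) (C : Finset ℕ) : #{u ∈ H.neighborFinset v | c s(v, u) ∈ C} ≤ #C :=
  card_le_card_of_injOn _ (fun _ hu => (mem_filter.1 hu).2)
    ((hc.injOn_neighborSet v).mono fun u hu => by simpa using (mem_filter.1 hu).1)

section RainbowEmbedding

variable {V W : Type*} [DecidableEq W]

def IsRootedSubtree (pr : W → W) (x0 : W) (s : Finset W) : Prop :=
  x0 ∈ s ∧ ∀ w ∈ s, w ≠ x0 → pr w ∈ s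

lemma IsRootedSubtree.induction {pr : W → W} {x0 : W} (D : W → ℕ)
    (hD : ∀ w, w ≠ x0 → D (pr w) < D w) {p : Finset W → Prop} (root : p {x0})
    (step : ∀ s w, IsRootedSubtree pr x0 s → w ∉ s → pr w ∈ s → p s → p (insert w s))
    (s : Finset W) (hs : IsRootedSubtree pr x0 s) : p s := by
  induction s using Finset.strongInduction with
  | H s ih =>
  obtain ⟨hx0, hcl⟩ := hs
  rcases (s.erase x0).eq_empty_or_nonempty with hempty | hne
  · rwa [← insert_erase hx0, hempty]
  obtain ⟨w, hw, hwmax⟩ := exists_max_image _ D hne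
  obtain ⟨hwx0, hws⟩ := mem_erase.1 hw
  have hpr_ne : ∀ z ∈ s, z ≠ x0 → pr z ≠ w := fun z hz hzx0 hzw =>
    (hwmax z (mem_erase.2 ⟨hzx0, hz⟩)).not_gt (hzw ▸ hD z hzx0)
  have hsub : IsRootedSubtree pr x0 (s.erase w) :=
    ⟨mem_erase.2 ⟨hwx0.symm, hx0⟩, fun z hz hzx0 =>
      mem_erase.2 ⟨hpr_ne z (mem_of_mem_erase hz) hzx0, hcl z (mem_of_mem_erase hz) hzx0⟩⟩
  rw [← insert_erase hws]
  exact step _ w hsub (notMem_erase w s)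
    (mem_erase.2 ⟨fun h => (hD w hwx0).ne (congrArg D h), hcl w hws hwx0⟩)
    (ih _ (erase_ssubset hws) hsub)

structure IsRainbowPartialEmbedding (H : SimpleGraph V) (c : Sym2 V → ℕ) (pr : W → W) (x0 : W)
    (v0 : V) (B : Finset V) (s : Finset W) (f : W → V) : Prop where
  map_root : f x0 = v0
  injOn : Set.InjOn f s
  mem : ∀ w ∈ s, f w ∈ B
  adj : ∀ w ∈ s, w ≠ x0 → H.Adj (f (pr w)) (f w)
  not_adj_root : ∀ w ∈ s, pr w ≠ x0 → ¬H.Adj v0 (f w)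
  rainbow : Set.InjOn (fun w => c s(f (pr w), f w)) (s.erase x0)

variable {H : SimpleGraph V} {c : Sym2 V → ℕ} {pr : W → W}
  {x0 : W} {v0 : V} {B : Finset V} {s : Finset W} {f : W → V}

def usedColors (c : Sym2 V → ℕ) (pr : W → W) (x0 : W) (s : Finset W) (f : W → V) :
    Finset ℕ :=
  (s.erase x0).image fun w => c s(f (pr w), f w)

lemma card_usedColors_lt (hx0 : x0 ∈ s) : #(usedColors c pr x0 s f) < #s :=
  card_image_le.trans_lt (card_erase_lt_of_mem hx0)

lemma IsRainbowPartialEmbedding.singleton (hv0 : v0 ∈ B) :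
    IsRainbowPartialEmbedding H c pr x0 v0 B {x0} fun _ => v0 where
  map_root := rfl
  injOn := by rw [coe_singleton]; exact Set.injOn_singleton _ _
  mem := fun _ _ => hv0
  adj := fun _ hw hwx => absurd (mem_singleton.1 hw) hwx
  not_adj_root := fun _ _ _ => H.irrefl
  rainbow := by simp

lemma IsRainbowPartialEmbedding.hasRainbowCopy [Fintype W] {T : SimpleGraph W}
    (hedge : ∀ a b, T.Adj a b → ∃ w, w ≠ x0 ∧ s(a, b) = s(pr w, w))
    (h : IsRainbowPartialEmbedding H c pr x0 v0 B univ f) : HasRainbowCopy H c T := by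
  have hinj : Function.Injective f := Set.injOn_univ.1 (by simpa using h.injOn)
  have hmap : ∀ a b, s(f a, f b) = Sym2.map f s(a, b) := fun _ _ => rfl
  refine ⟨⟨f, hinj⟩, fun a b hab => ?_, fun a b a' b' hab hab' hne => ?_⟩
  · obtain ⟨w, hwx, he⟩ := hedge a b hab
    rw [Function.Embedding.coeFn_mk, ← mem_edgeSet, hmap, he]
    exact h.adj w (mem_univ w) hwx
  · obtain ⟨w, hwx, he⟩ := hedge a b hab
    obtain ⟨w', hw'x, he'⟩ := hedge a' b' hab'
    have hww' : w ≠ w' := by rintro rfl; exact hne (he.trans he'.symm)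
    rw [Function.Embedding.coeFn_mk, hmap, he, hmap, he']
    exact fun heq => hww' (h.rainbow (by simpa using hwx) (by simpa using hw'x) heq)

variable [Fintype V] [DecidableEq V] [DecidableRel H.Adj]

def extensionCandidates (H : SimpleGraph V) [DecidableRel H.Adj] (c : Sym2 V → ℕ) (pr : W → W)
    (x0 : W) (v0 : V) (B : Finset V) (s : Finset W) (f : W → V) (p : W) : Finset V :=
  {u ∈ H.neighborFinset (f p) ∩ B |
    u ∉ s.image f ∧ c s(f p, u) ∉ usedColors c pr x0 s f ∧ (p ≠ x0 → ¬H.Adj v0 u)}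

namespace IsRainbowPartialEmbedding

lemma insert (h : IsRainbowPartialEmbedding H c pr x0 v0 B s f)
    (hs : IsRootedSubtree pr x0 s) {w : W} (hw : w ∉ s) (hpw : pr w ∈ s) {u : V}
    (hu : u ∈ extensionCandidates H c pr x0 v0 B s f (pr w)) :
    IsRainbowPartialEmbedding H c pr x0 v0 B (insert w s) (Function.update f w u) := by
  obtain ⟨huN, hufresh, hucol, hufar⟩ := mem_filter.1 hu
  obtain ⟨huadj, huB⟩ := mem_inter.1 huN
  rw [mem_neighborFinset] at huadj
  have hwx0 : w ≠ x0 := fun h => hw (h ▸ hs.1)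
  have heq : Set.EqOn (Function.update f w u) f s := fun z hz =>
    Function.update_of_ne (ne_of_mem_of_not_mem hz hw) u f
  have hpr : ∀ z ∈ s, z ≠ x0 → Function.update f w u (pr z) = f (pr z) :=
    fun z hz hzx => heq (hs.2 z hz hzx)
  have hcolor : Set.EqOn (fun z => c s(Function.update f w u (pr z), Function.update f w u z))
      (fun z => c s(f (pr z), f z)) (s.erase x0) := fun z hz => by
    obtain ⟨hzx, hz⟩ := mem_erase.1 hz
    simp only [heq hz, hpr z hz hzx]
  constructor
  · rw [heq hs.1, h.map_root]
  · rw [coe_insert, Set.injOn_insert (by simpa using hw), heq.image_eq, Function.update_self]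
    exact ⟨h.injOn.congr heq.symm, by simpa using hufresh⟩
  · intro z hz
    rcases mem_insert.1 hz with rfl | hz
    · rwa [Function.update_self]
    · rw [heq hz]; exact h.mem z hz
  · intro z hz hzx
    rcases mem_insert.1 hz with rfl | hz
    · rwa [Function.update_self, heq hpw]
    · rw [heq hz, hpr z hz hzx]; exact h.adj z hz hzx
  · intro z hz hpz
    rcases mem_insert.1 hz with rfl | hz
    · rw [Function.update_self]; exact hufar hpz
    · rw [heq hz]; exact h.not_adj_root z hz hpz
  · rw [erase_insert_of_ne hwx0, coe_insert, Set.injOn_insert (by simp [hw]), hcolor.image_eq]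
    refine ⟨h.rainbow.congr hcolor.symm, ?_⟩
    simp only [Function.update_self, heq hpw]
    rwa [← coe_image, mem_coe]

lemma extensionCandidates_root_nonempty (h : IsRainbowPartialEmbedding H c pr x0 v0 B s f)
    (hc : IsProperEdgeColoring H c) (hx0 : x0 ∈ s) (hv0 : #s ≤ H.degreeIn B v0) :
    (extensionCandidates H c pr x0 v0 B s f x0).Nonempty := by
  set clash := {u ∈ H.neighborFinset v0 | c s(v0, u) ∈ usedColors c pr x0 s f}
  have hsub :
      H.neighborFinset v0 ∩ B ⊆ extensionCandidates H c pr x0 v0 B s f x0 ∪ clash := by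
    intro u hu
    rw [extensionCandidates, h.map_root, mem_union, or_iff_not_imp_right]
    intro hclash
    have hadj : H.Adj v0 u := (mem_neighborFinset _ _ _).1 (mem_inter.1 hu).1
    have hcol : c s(v0, u) ∉ usedColors c pr x0 s f := fun hcol =>
      hclash (mem_filter.2 ⟨(mem_inter.1 hu).1, hcol⟩)
    refine mem_filter.2 ⟨hu, fun himg => ?_, hcol, fun hne => absurd rfl hne⟩
    obtain ⟨z, hz, rfl⟩ := mem_image.1 himg
    have hzx : z ≠ x0 := by rintro rfl; exact H.irrefl (h.map_root ▸ hadj)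
    have hpz : pr z = x0 := by_contra fun hpz => h.not_adj_root z hz hpz hadj
    exact hcol (mem_image.2 ⟨z, mem_erase.2 ⟨hzx, hz⟩, by rw [hpz, h.map_root]⟩)
  have hcard := (card_le_card hsub).trans (card_union_le _ _)
  have hclash : #clash ≤ _ := hc.card_filter_neighborFinset_le v0 (usedColors c pr x0 s f)
  have hused := card_usedColors_lt (c := c) (pr := pr) (f := f) hx0
  exact card_pos.1 (by unfold degreeIn at hv0; omega)

lemma extensionCandidates_nonempty_of_ne_root (h : IsRainbowPartialEmbedding H c pr x0 v0 B s f)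
    (hc : IsProperEdgeColoring H c) {r : ℕ}
    (hK : ∀ x y, x ≠ y → #(H.neighborFinset x ∩ H.neighborFinset y) < r)
    (hx0 : x0 ∈ s) {p : W} (hp : p ∈ s) (hpx : p ≠ x0)
    (hdeg : 2 * (#s - 1) + (r - 1) < H.degreeIn B (f p)) :
    (extensionCandidates H c pr x0 v0 B s f p).Nonempty := by
  set clash := {u ∈ H.neighborFinset (f p) | c s(f p, u) ∈ usedColors c pr x0 s f}
  set common := H.neighborFinset (f p) ∩ H.neighborFinset v0
  have hsub : H.neighborFinset (f p) ∩ B ⊆ extensionCandidates H c pr x0 v0 B s f p ∪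
      ((s.image f).erase (f p) ∪ clash ∪ common) := by
    intro u hu
    rw [mem_union, or_iff_not_imp_right]
    simp only [mem_union, not_or]
    rintro ⟨⟨hold, hclash⟩, hcommon⟩
    have hadj : H.Adj (f p) u := (mem_neighborFinset _ _ _).1 (mem_inter.1 hu).1
    refine mem_filter.2 ⟨hu, fun himg => hold (mem_erase.2 ⟨hadj.ne', himg⟩),
      fun hcol => hclash (mem_filter.2 ⟨(mem_inter.1 hu).1, hcol⟩),
      fun _ hadj' => hcommon
        (mem_inter.2 ⟨(mem_inter.1 hu).1, (mem_neighborFinset _ _ _).2 hadj'⟩)⟩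
  have hfp : f p ≠ v0 := fun heq => hpx (h.injOn hp hx0 (heq.trans h.map_root.symm))
  have hcard := (card_le_card hsub).trans (card_union_le _ _)
  have hbad := card_union_le ((s.image f).erase (f p) ∪ clash) common
  have hbad' := card_union_le ((s.image f).erase (f p)) clash
  have hold : #((s.image f).erase (f p)) ≤ #s - 1 := by
    rw [card_erase_of_mem (mem_image_of_mem f hp)]
    exact Nat.sub_le_sub_right card_image_le 1
  have hclash : #clash ≤ _ := hc.card_filter_neighborFinset_le (f p) (usedColors c pr x0 s f)
  have hused := card_usedColors_lt (c := c) (pr := pr) (f := f) hx0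
  have hcommon : #common < r := hK _ _ hfp
  exact card_pos.1 (by unfold degreeIn at hdeg; omega)

end IsRainbowPartialEmbedding

lemma exists_isRainbowPartialEmbedding_of_subset (hc : IsProperEdgeColoring H c) {r k ℓ : ℕ}
    (hr : 3 ≤ r) (hl : 3 * k + 2 * (r - 3) < 4 * ℓ)
    (hK : ∀ x y, x ≠ y → #(H.neighborFinset x ∩ H.neighborFinset y) < r)
    (hB : ∀ v ∈ B, k ≤ 2 * H.degreeIn B v) (hv0B : v0 ∈ B) (hv0 : k ≤ H.degreeIn B v0)
    (D : W → ℕ) (hD : ∀ w, w ≠ x0 → D (pr w) < D w) {S : Finset W} (hS : #S + ℓ = k + 1)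
    (s : Finset W) (hs : IsRootedSubtree pr x0 s) (hsS : s ⊆ S) :
    ∃ f, IsRainbowPartialEmbedding H c pr x0 v0 B s f := by
  refine IsRootedSubtree.induction D hD (p := fun s => s ⊆ S → ∃ f, _)
    (fun _ => ⟨_, .singleton hv0B⟩) (fun s w hs hw hpw ih hsub => ?_) s hs hsS
  obtain ⟨f, hf⟩ := ih ((subset_insert w s).trans hsub)
  have hcard := card_le_card hsub
  rw [card_insert_of_notMem hw] at hcard
  obtain ⟨u, hu⟩ : (extensionCandidates H c pr x0 v0 B s f (pr w)).Nonempty := by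
    by_cases hpx : pr w = x0
    · rw [hpx]; exact hf.extensionCandidates_root_nonempty hc hs.1 (by omega)
    · have := hB _ (hf.mem _ hpw)
      have := card_pos.2 ⟨_, hs.1⟩
      exact hf.extensionCandidates_nonempty_of_ne_root hc hK hs.1 hpw hpx (by omega)
  exact ⟨_, hf.insert hs hw hpw hu⟩

lemma exists_isRainbowPartialEmbedding_union (hc : IsProperEdgeColoring H c) {S L : Finset W}
    (hS : IsRootedSubtree pr x0 S) (hSf : ∃ f, IsRainbowPartialEmbedding H c pr x0 v0 B S f)
    (hL : ∀ w ∈ L, pr w = x0) (hdisj : Disjoint S L) (hv0 : #S + #L ≤ H.degreeIn B v0 + 1) :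
    ∃ f, IsRainbowPartialEmbedding H c pr x0 v0 B (S ∪ L) f := by
  induction L using Finset.induction_on with
  | empty => simpa using hSf
  | insert a L ha ih =>
    have hpa : pr a = x0 := hL a (mem_insert_self a L)
    have hL' : ∀ w ∈ L, pr w = x0 := fun w hw => hL w (mem_insert_of_mem hw)
    have hdisj' := disjoint_insert_right.1 hdisj
    rw [card_insert_of_notMem ha] at hv0
    obtain ⟨f, hf⟩ := ih hL' hdisj'.2 (by omega)
    have hSL : IsRootedSubtree pr x0 (S ∪ L) :=
      ⟨mem_union_left _ hS.1, fun z hz hzx => (mem_union.1 hz).elim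
        (fun hz => mem_union_left _ (hS.2 z hz hzx))
        (fun hz => hL' z hz ▸ mem_union_left _ hS.1)⟩
    obtain ⟨u, hu⟩ := hf.extensionCandidates_root_nonempty hc hSL.1
      ((card_union_le S L).trans (by omega))
    rw [union_insert]
    exact ⟨_, hf.insert hSL (by simp [ha, hdisj'.1]) (hpa ▸ hSL.1) (by rwa [hpa])⟩

end RainbowEmbedding

section Tree

variable {V W : Type*} [Fintype V] [Fintype W] {r k ℓ : ℕ} {T : SimpleGraph W} {x0 : W}

lemma hasRainbowCopy_of_minDegree_core [DecidableEq V] (hr : 3 ≤ r) (hT : T.IsTree) (hTk : T.edgeSet.ncard = k)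
    (hx0 : {y : W | T.Adj x0 y ∧ (T.neighborSet y).ncard = 1}.ncard = ℓ)
    (hl : 3 * k + 2 * (r - 3) < 4 * ℓ) {H : SimpleGraph V} [DecidableRel H.Adj]
    (hK : ∀ x y, x ≠ y → #(H.neighborFinset x ∩ H.neighborFinset y) < r)
    {c : Sym2 V → ℕ} (hc : IsProperEdgeColoring H c) {B : Finset V} {v0 : V}
    (hB : ∀ v ∈ B, k ≤ 2 * H.degreeIn B v) (hv0B : v0 ∈ B) (hv0 : k ≤ H.degreeIn B v0) :
    HasRainbowCopy H c T := by
  classical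
  set L : Finset W := {y | T.Adj x0 y ∧ (T.neighborSet y).ncard = 1}
  have hL : #L = ℓ := by rw [← hx0, ← Set.ncard_coe_finset]; simp [L]
  have hcardW : #(univ : Finset W) = k + 1 := by
    rw [card_univ, ← hT.card_edgeFinset, ← hTk, ← coe_edgeFinset, Set.ncard_coe_finset]
  have hleaf : ∀ y ∈ L, ∀ z, T.Adj y z → z = x0 := fun y hy _ hz =>
    have hy' : T.Adj x0 y ∧ (T.neighborSet y).ncard = 1 := by simpa [L] using hy
    eq_of_adj_of_ncard_neighborSet_eq_one hy'.2 hz hy'.1.symm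
  have hx0L : x0 ∉ L := fun h => T.irrefl (mem_filter.1 h).2.1
  have hS : IsRootedSubtree (hT.parent x0) x0 (univ \ L) :=
    ⟨mem_sdiff.2 ⟨mem_univ _, hx0L⟩, fun w _ hwx => mem_sdiff.2 ⟨mem_univ _, fun hpw =>
      hwx (hleaf _ hpw w (IsTree.adj_parent hwx).symm)⟩⟩
  have hcard := card_sdiff_add_card_eq_card (subset_univ L)
  have hSf := exists_isRainbowPartialEmbedding_of_subset hc hr hl hK hB hv0B hv0 (hT.depth x0)
    (fun _ hw => IsTree.depth_parent_lt hw) (by omega) _ hS subset_rfl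
  obtain ⟨f, hf⟩ := exists_isRainbowPartialEmbedding_union hc hS hSf
    (fun y hy => hleaf y hy _ (IsTree.adj_parent (ne_of_mem_of_not_mem hy hx0L)))
    sdiff_disjoint (by omega)
  rw [sdiff_union_of_subset (subset_univ L)] at hf
  exact hf.hasRainbowCopy fun _ _ hab => IsTree.exists_eq_mk_parent_of_adj hab

lemma two_mul_ncard_edgeSet_le_of_rainbowFree (hr : 3 ≤ r) (hT : T.IsTree)
    (hTk : T.edgeSet.ncard = k)
    (hx0 : {y : W | T.Adj x0 y ∧ (T.neighborSet y).ncard = 1}.ncard = ℓ)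
    (hl : 3 * k + 2 * (r - 3) < 4 * ℓ) {G H : SimpleGraph V}
    (hG : ¬ ContainsCopy G (completeBipartiteGraph (Fin 2) (Fin r))) (hHG : H ≤ G)
    (hH : RainbowFree H T) : 2 * H.edgeSet.ncard ≤ (k - 1) * Fintype.card V := by
  classical
  by_contra! hdense
  obtain ⟨c, hc, hno⟩ := hH
  have hK : ∀ x y, x ≠ y → #(H.neighborFinset x ∩ H.neighborFinset y) < r :=
    fun _ _ hxy => card_inter_neighborFinset_lt (fun h => hG (h.mono hHG)) hxy
  rw [← coe_edgeFinset, Set.ncard_coe_finset, ← sum_degreeIn_univ, ← card_univ] at hdense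
  obtain ⟨B, hB, hBdense⟩ := exists_minDegree_core hdense
  obtain ⟨v0, hv0B, hv0⟩ := exists_le_degreeIn hBdense
  exact hno (hasRainbowCopy_of_minDegree_core hr hT hTk hx0 hl hK hc hB hv0B hv0)

end Tree

/-- Let `r ≥ 3` and let `T` be a tree with `k` edges having a vertex
`x₀` adjacent to `ℓ` leaves, where `ℓ > 3k/4 + (r-3)/2` (i.e. `4ℓ > 3k + 2(r-3)`).
Then every `K_{2,r}`-free graph `G` satisfies `2 · ex*(G,T) ≤ (k-1) · |V(G)|`. -/
theorem stmt17 {V W : Type*} [Fintype V] [Fintype W] (r k ℓ : ℕ) (hr : 3 ≤ r)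
    (T : SimpleGraph W) (hT : T.IsTree) (hTk : T.edgeSet.ncard = k)
    (x0 : W) (hx0 : {y : W | T.Adj x0 y ∧ (T.neighborSet y).ncard = 1}.ncard = ℓ)
    (hl : 3 * k + 2 * (r - 3) < 4 * ℓ)
    (G : SimpleGraph V)
    (hG : ¬ ContainsCopy G (completeBipartiteGraph (Fin 2) (Fin r))) :
    2 * rainbowExtremalNumber G T ≤ (k - 1) * Fintype.card V := by
  have hbound : rainbowExtremalNumber G T ≤ (k - 1) * Fintype.card V / 2 :=
    csSup_le' fun _ ⟨_, hHG, hH, hm⟩ => by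
      have := two_mul_ncard_edgeSet_le_of_rainbowFree hr hT hTk hx0 hl hG hHG hH
      omega
  omega
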